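/- Coalescing can be redundantly pushed into pointwise addition: for all temporal K-elements k and k', coal(k +_P k') = coal(coal(k) +_P k'). -/

import Mathlib

open scoped Classical

namespace TemporalK

variable {K : Type*}

/-- An interval over the time domain `{0, ..., N-1}`: a pair `(b, e)` with `b < e ≤ N`. -/
abbrev TInterval (N : ℕ) := {I : Fin (N + 1) × Fin (N + 1) // I.1 < I.2}

/-- A temporal `K`-element: a function assigning to each interval an element of `K`. -/
abbrev TempEl (N : ℕ) (K : Type*) := TInterval N → K

/-- The interval `I = (b, e)` contains the time point `T` iff `b ≤ T < e`. -/
def Contains {N : ℕ} (I : TInterval N) (T : ℕ) : Prop :=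
  (I.val.1 : ℕ) ≤ T ∧ T < (I.val.2 : ℕ)

/-- The timeslice of `𝒯` at time point `T`: the sum of `𝒯 I` over all intervals `I`
containing `T`. -/
noncomputable def slice {N : ℕ} [CommSemiring K] (𝒯 : TempEl N K) (T : ℕ) : K :=
  ∑ I ∈ Finset.univ.filter (fun I : TInterval N => Contains I T), 𝒯 I

/-- `T` is an (annotation) changepoint of `𝒯` iff `T = 0` or the timeslices at `T - 1`
and `T` differ. -/
def Changepoint {N : ℕ} [CommSemiring K] (𝒯 : TempEl N K) (T : ℕ) : Prop :=
  T = 0 ∨ slice 𝒯 (T - 1) ≠ slice 𝒯 T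

/-- `I = (b, e)` is a changepoint interval of `𝒯` iff `b` is a changepoint, `e` is a
changepoint or equals `N`, and no time point strictly between `b` and `e` is a changepoint. -/
def CPInterval {N : ℕ} [CommSemiring K] (𝒯 : TempEl N K) (I : TInterval N) : Prop :=
  Changepoint 𝒯 (I.val.1 : ℕ) ∧
    (Changepoint 𝒯 (I.val.2 : ℕ) ∨ (I.val.2 : ℕ) = N) ∧
    ∀ T : ℕ, (I.val.1 : ℕ) < T → T < (I.val.2 : ℕ) → ¬ Changepoint 𝒯 T

/-- `K`-coalescing: maps changepoint intervals `(b, e)` to the timeslice at `b` and all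
other intervals to `0`. -/
noncomputable def coal {N : ℕ} [CommSemiring K] (𝒯 : TempEl N K) : TempEl N K :=
  fun I => if CPInterval 𝒯 I then slice 𝒯 (I.val.1 : ℕ) else 0

/-- Snapshot equivalence: equal timeslices at every time point. -/
def SnapEq {N : ℕ} [CommSemiring K] (k k' : TempEl N K) : Prop :=
  ∀ T : ℕ, T < N → slice k T = slice k' T

/-- A temporal `K`-element is coalesced iff it is the `K`-coalescing of some
temporal `K`-element. -/
def Coalesced {N : ℕ} [CommSemiring K] (k : TempEl N K) : Prop :=
  ∃ 𝒯 : TempEl N K, k = coal 𝒯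

/-- Pointwise addition of temporal `K`-elements. -/
def padd {N : ℕ} [CommSemiring K] (k k' : TempEl N K) : TempEl N K :=
  fun I => k I + k' I

/-- Pointwise multiplication of temporal `K`-elements:
`(k ·_P k')(I) = Σ k(I')·k'(I'')` over all pairs `(I', I'')` whose intersection is
nonempty and equals `I`. -/
noncomputable def pmul {N : ℕ} [CommSemiring K] (k k' : TempEl N K) : TempEl N K :=
  fun I =>
    ∑ p ∈ Finset.univ.filter (fun p : TInterval N × TInterval N =>
        max (p.1.val.1 : ℕ) (p.2.val.1 : ℕ) < min (p.1.val.2 : ℕ) (p.2.val.2 : ℕ) ∧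
        (I.val.1 : ℕ) = max (p.1.val.1 : ℕ) (p.2.val.1 : ℕ) ∧
        (I.val.2 : ℕ) = min (p.1.val.2 : ℕ) (p.2.val.2 : ℕ)),
      k p.1 * k' p.2

/-- Addition of the period semiring: coalesced pointwise addition. -/
noncomputable def tadd {N : ℕ} [CommSemiring K] (k k' : TempEl N K) : TempEl N K :=
  coal (padd k k')

/-- Multiplication of the period semiring: coalesced pointwise multiplication. -/
noncomputable def tmul {N : ℕ} [CommSemiring K] (k k' : TempEl N K) : TempEl N K :=
  coal (pmul k k')

/-- The zero of the period semiring: maps every interval to `0`. -/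
def zeroT (N : ℕ) (K : Type*) [CommSemiring K] : TempEl N K := fun _ => 0

/-- The one of the period semiring: maps the interval `(0, N)` to `1` and every other
interval to `0`. -/
def oneT (N : ℕ) (K : Type*) [CommSemiring K] : TempEl N K :=
  fun I => if (I.val.1 : ℕ) = 0 ∧ (I.val.2 : ℕ) = N then 1 else 0

/-- Encoding of an annotation history `f : time points → K` as a coalesced temporal
`K`-element: coalesce the element assigning `f T` to each singleton interval `(T, T+1)`. -/
noncomputable def enc {N : ℕ} [CommSemiring K] (f : Fin N → K) : TempEl N K :=
  coal (fun I =>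
    if h : (I.val.2 : ℕ) = (I.val.1 : ℕ) + 1 then
      f ⟨(I.val.1 : ℕ), by have := I.val.2.isLt; omega⟩
    else 0)

/-- The natural preorder of the semiring `K`. -/
def nle [CommSemiring K] (a b : K) : Prop := ∃ c, a + c = b

/-- The natural preorder of the period semiring (on coalesced temporal `K`-elements). -/
def tle {N : ℕ} [CommSemiring K] (k k' : TempEl N K) : Prop :=
  ∃ k'' : TempEl N K, Coalesced k'' ∧ tadd k k'' = k'

/-- The pointwise monus: assigns `τ_T(k) −_K τ_T(k')` to each singleton interval
`(T, T+1)` and `0` to every non-singleton interval. -/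
noncomputable def pmonus {N : ℕ} [CommSemiring K] (monus : K → K → K)
    (k k' : TempEl N K) : TempEl N K :=
  fun I =>
    if (I.val.2 : ℕ) = (I.val.1 : ℕ) + 1 then
      monus (slice k (I.val.1 : ℕ)) (slice k' (I.val.1 : ℕ))
    else 0

/-- The monus of the period semiring: coalesced pointwise monus. -/
noncomputable def tmonus {N : ℕ} [CommSemiring K] (monus : K → K → K)
    (k k' : TempEl N K) : TempEl N K :=
  coal (pmonus monus k k')

end TemporalK

/-!
Coalescing preserves every timeslice, and `coal 𝒯` depends on `𝒯` only through its
timeslices. Since timeslices are additive, `k +_P k'` and `coal k +_P k'` have the same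
timeslices, hence the same coalescing.
-/

namespace TemporalK

variable {N : ℕ} {K : Type*} [CommSemiring K]

lemma slice_padd (k k' : TempEl N K) (T : ℕ) :
    slice (padd k k') T = slice k T + slice k' T :=
  Finset.sum_add_distrib

lemma slice_eq_zero_of_le (k : TempEl N K) {T : ℕ} (hT : N ≤ T) : slice k T = 0 := by
  refine Finset.sum_eq_zero fun I hI => ?_
  have hIT : Contains I T := (Finset.mem_filter.1 hI).2
  have := I.val.2.isLt
  unfold Contains at hIT
  omega

lemma slice_eq_of_not_changepoint (k : TempEl N K) {b T : ℕ} (hbT : b ≤ T)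
    (h : ∀ m, b < m → m ≤ T → ¬ Changepoint k m) :
    slice k b = slice k T := by
  induction T, hbT using Nat.le_induction with
  | base => rfl
  | succ T hbT ih =>
    have hT : ¬ Changepoint k (T + 1) := h (T + 1) (by omega) le_rfl
    simp only [Changepoint, not_or, not_not, Nat.add_sub_cancel] at hT
    rw [ih fun m hm hmT => h m hm (by omega), hT.2]

lemma exists_cpInterval_contains (k : TempEl N K) {T : ℕ} (hT : T < N) :
    ∃ I : TInterval N, Contains I T ∧ CPInterval k I := by
  set b := Nat.findGreatest (Changepoint k) T
  have hb : b ≤ T := Nat.findGreatest_le T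
  have hex : ∃ e, T < e ∧ (Changepoint k e ∨ e = N) := ⟨N, hT, Or.inr rfl⟩
  set e := Nat.find hex
  obtain ⟨hTe, he⟩ : T < e ∧ (Changepoint k e ∨ e = N) := Nat.find_spec hex
  have heN : e ≤ N := Nat.find_min' hex ⟨hT, Or.inr rfl⟩
  refine ⟨⟨(⟨b, by omega⟩, ⟨e, by omega⟩), by simp only [Fin.mk_lt_mk]; omega⟩,
    ⟨hb, hTe⟩, Nat.findGreatest_spec (Nat.zero_le T) (Or.inl rfl), he, fun m hbm hme => ?_⟩
  by_cases hmT : m ≤ T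
  · exact Nat.findGreatest_is_greatest hbm hmT
  · exact fun hm => Nat.find_min hex hme ⟨by omega, Or.inl hm⟩

namespace CPInterval

variable {k : TempEl N K} {I J : TInterval N} {T : ℕ}

lemma fst_le (hI : CPInterval k I) (hJ : Changepoint k J.val.1)
    (hIT : Contains I T) (hJT : Contains J T) : (J.val.1 : ℕ) ≤ I.val.1 := by
  by_contra h
  exact hI.2.2 _ (by omega) (by unfold Contains at *; omega) hJ

lemma snd_le (hI : CPInterval k I) (hJ : Changepoint k J.val.2 ∨ (J.val.2 : ℕ) = N)
    (hIT : Contains I T) (hJT : Contains J T) : (I.val.2 : ℕ) ≤ J.val.2 := by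
  by_contra h
  rcases hJ with hJ | hJ
  · exact hI.2.2 _ (by unfold Contains at *; omega) (by omega) hJ
  · have := I.val.2.isLt
    omega

lemma eq_of_contains (hI : CPInterval k I) (hJ : CPInterval k J)
    (hIT : Contains I T) (hJT : Contains J T) : I = J :=
  Subtype.ext <| Prod.ext
    (Fin.ext <| le_antisymm (hJ.fst_le hI.1 hJT hIT) (hI.fst_le hJ.1 hIT hJT))
    (Fin.ext <| le_antisymm (hI.snd_le hJ.2.1 hIT hJT) (hJ.snd_le hI.2.1 hJT hIT))

end CPInterval

lemma slice_coal (k : TempEl N K) (T : ℕ) : slice (coal k) T = slice k T := by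
  by_cases hT : T < N
  swap
  · rw [slice_eq_zero_of_le _ (not_lt.1 hT), slice_eq_zero_of_le _ (not_lt.1 hT)]
  obtain ⟨I₀, hI₀T, hI₀⟩ := exists_cpInterval_contains k hT
  -- `I₀` is the only changepoint interval containing `T`, so the other summands vanish.
  have hsum : slice (coal k) T = coal k I₀ := by
    refine Finset.sum_eq_single_of_mem I₀ (Finset.mem_filter.2 ⟨Finset.mem_univ _, hI₀T⟩)
      fun I hI hne => if_neg fun hI' =>
        hne (hI'.eq_of_contains hI₀ (Finset.mem_filter.1 hI).2 hI₀T)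
  rw [hsum, coal, if_pos hI₀]
  exact slice_eq_of_not_changepoint k hI₀T.1 fun m hm hmT =>
    hI₀.2.2 m hm (lt_of_le_of_lt hmT hI₀T.2)

lemma coal_eq_coal_of_slice_eq {𝒯 𝒯' : TempEl N K} (h : ∀ T, slice 𝒯 T = slice 𝒯' T) :
    coal 𝒯 = coal 𝒯' := by
  have hcp : CPInterval 𝒯 = CPInterval 𝒯' := by
    funext I
    simp only [CPInterval, Changepoint, h]
  funext I
  rw [coal, coal, hcp, h]

end TemporalK

open TemporalK

theorem coal_push_padd_general {N : ℕ} {K : Type*} [CommSemiring K]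
    (k k' : TempEl N K) :
    coal (padd k k') = coal (padd (coal k) k') :=
  coal_eq_coal_of_slice_eq fun T => by rw [slice_padd, slice_padd, slice_coal]

theorem coal_push_padd {N : ℕ} (hN : 1 ≤ N) {K : Type*} [CommSemiring K]
    (k k' : TempEl N K) :
    coal (padd k k') = coal (padd (coal k) k') :=
  coal_push_padd_general k k'
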